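/- Let K be a field, Xᵢ, Yᵢ ⊆ K finite with Yᵢ ⊆ Xᵢ, P = (∏Xᵢ)\(∏Yᵢ), aᵢ = |Xᵢ|, bᵢ = |Yᵢ|. Let f ∈ K[x₁,…,xₙ] and let g ∈ I(P) + ⟨f⟩ with leading monomial x₁^{e₁}⋯xₙ^{eₙ} where eᵢ < aᵢ for all i. Then |P \ V(f)| ≥ ∏ᵢ(aᵢ − eᵢ) − ∏ᵢ min(bᵢ, aᵢ − eᵢ). -/

import Mathlib

/-- A finite set `A ⊆ K` is `lam`-null: the coefficients of `∏_{a∈A}(x-a)` in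
degrees `|A|-lam, …, |A|-1` vanish. -/
def IsNull {K : Type*} [Field K] (lam : ℕ) (A : Finset K) : Prop :=
  ∀ b : ℕ, A.card - lam ≤ b → b < A.card →
    (∏ a ∈ A, (Polynomial.X - Polynomial.C a)).coeff b = 0

/-- A multivariate polynomial is `lam`-lacunary. -/
def MvLacunary {K : Type*} [CommSemiring K] {n : ℕ} (lam : Fin n → ℕ)
    (g : MvPolynomial (Fin n) K) : Prop :=
  ∃ μ ∈ g.support, ∀ ν ∈ g.support, ∀ i, ν i + lam i < μ i ∨ ν i = μ i

/-- An admissible monomial ordering: total order compatible with addition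
and refining coordinatewise divisibility. -/
def Admissible {n : ℕ} (ord : LinearOrder (Fin n →₀ ℕ)) : Prop :=
  (∀ a b c : Fin n →₀ ℕ, ord.le a b → ord.le (a + c) (b + c)) ∧
  (∀ a b : Fin n →₀ ℕ, (∀ i, a i ≤ b i) → ord.le a b)

/-- Leading exponent of a nonzero polynomial w.r.t. an ordering. -/
noncomputable def leadExp {K : Type*} [CommSemiring K] {n : ℕ}
    (ord : LinearOrder (Fin n →₀ ℕ)) (g : MvPolynomial (Fin n) K) (hg : g ≠ 0) :
    Fin n →₀ ℕ :=
  @Finset.max' _ ord g.support (MvPolynomial.support_nonempty.mpr hg)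

/-- The vanishing ideal of a set of points. -/
noncomputable def vanishingIdealOn {K : Type*} [Field K] {n : ℕ} (X : Set (Fin n → K)) :
    Ideal (MvPolynomial (Fin n) K) where
  carrier := {f | ∀ x ∈ X, MvPolynomial.eval x f = 0}
  add_mem' := by intro a b ha hb x hx; simp [ha x hx, hb x hx]
  zero_mem' := by intro x hx; simp
  smul_mem' := by intro c a ha x hx; simp [smul_eq_mul, ha x hx]

/-- `B` is a Gröbner basis of `I` w.r.t. `ord`. -/
def IsGroebner {K : Type*} [Field K] {n : ℕ} (ord : LinearOrder (Fin n →₀ ℕ))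
    (B : Set (MvPolynomial (Fin n) K)) (I : Ideal (MvPolynomial (Fin n) K)) : Prop :=
  Ideal.span B = I ∧
  ∀ f, f ∈ I → ∀ hf : f ≠ 0, ∃ g ∈ B, ∃ hg : g ≠ 0,
    ∀ i, leadExp ord g hg i ≤ leadExp ord f hf i

/-- Standard monomials of an ideal `J`: exponents not divisible by the leading
monomial of any nonzero element of `J`. -/
def stdMon {K : Type*} [Field K] {n : ℕ} (ord : LinearOrder (Fin n →₀ ℕ))
    (J : Ideal (MvPolynomial (Fin n) K)) : Set (Fin n →₀ ℕ) :=
  {α | ∀ g ∈ J, ∀ hg : g ≠ 0, ¬ ∀ i, leadExp ord g hg i ≤ α i}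

/-- `f` has a zero of multiplicity ≥ t at `c`: `f(x + c) ∈ ⟨x₁,…,xₙ⟩^t`. -/
def HasMultZero {K : Type*} [Field K] {n : ℕ} (t : ℕ) (c : Fin n → K)
    (f : MvPolynomial (Fin n) K) : Prop :=
  MvPolynomial.eval₂Hom MvPolynomial.C
      (fun i => MvPolynomial.X i + MvPolynomial.C (c i)) f ∈
    (Ideal.span (Set.range (MvPolynomial.X : Fin n → MvPolynomial (Fin n) K))) ^ t

section OrdFacts
variable {n : ℕ} {ord : LinearOrder (Fin n →₀ ℕ)} (hadm : Admissible ord)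

lemma adm_le (hadm : Admissible ord) {a b : Fin n →₀ ℕ} (h : ∀ i, a i ≤ b i) : ord.le a b := hadm.2 a b h

lemma ord_le_antisymm {a b : Fin n →₀ ℕ} (h1 : ord.le a b) (h2 : ord.le b a) : a = b :=
  @le_antisymm _ ord.toPartialOrder a b h1 h2

lemma ord_le_total (a b : Fin n →₀ ℕ) : ord.le a b ∨ ord.le b a := @le_total _ ord a b

lemma ord_le_refl (a : Fin n →₀ ℕ) : ord.le a a := @le_refl _ ord.toPreorder a

lemma ord_le_trans {a b c : Fin n →₀ ℕ} (h1 : ord.le a b) (h2 : ord.le b c) : ord.le a c :=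
  @le_trans _ ord.toPreorder a b c h1 h2

/-- strict version: le and ne -/
def OrdLt (ord : LinearOrder (Fin n →₀ ℕ)) (a b : Fin n →₀ ℕ) : Prop := ord.le a b ∧ a ≠ b

lemma adm_lt (hadm : Admissible ord) {a b : Fin n →₀ ℕ} (h : ∀ i, a i ≤ b i) (hne : a ≠ b) : OrdLt ord a b :=
  ⟨hadm.2 a b h, hne⟩

lemma ordLt_of_le_of_lt {a b c : Fin n →₀ ℕ} (h1 : ord.le a b) (h2 : OrdLt ord b c) :
    OrdLt ord a c := by
  refine ⟨ord_le_trans h1 h2.1, fun h => h2.2 ?_⟩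
  subst h
  exact ord_le_antisymm h2.1 h1

lemma ordLt_of_lt_of_le {a b c : Fin n →₀ ℕ} (h1 : OrdLt ord a b) (h2 : ord.le b c) :
    OrdLt ord a c := by
  refine ⟨ord_le_trans h1.1 h2, fun h => h1.2 ?_⟩
  subst h
  exact ord_le_antisymm h1.1 h2

lemma adm_add_le (hadm : Admissible ord) {a b : Fin n →₀ ℕ} (h : ord.le a b) (c : Fin n →₀ ℕ) :
    ord.le (a + c) (b + c) := hadm.1 a b c h

lemma adm_add_lt (hadm : Admissible ord) {a b : Fin n →₀ ℕ} (h : OrdLt ord a b) (c : Fin n →₀ ℕ) :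
    OrdLt ord (a + c) (b + c) :=
  ⟨hadm.1 a b c h.1, fun hc => h.2 (add_right_cancel hc)⟩

lemma adm_add_lt' (hadm : Admissible ord) {a b : Fin n →₀ ℕ} (h : OrdLt ord a b) (c : Fin n →₀ ℕ) :
    OrdLt ord (c + a) (c + b) := by
  rw [add_comm c a, add_comm c b]; exact adm_add_lt hadm h c

lemma ord_wf (hadm : Admissible ord) : WellFounded (OrdLt ord) := by
  haveI : IsTrans (Fin n →₀ ℕ) (OrdLt ord) :=
    ⟨fun _ _ _ h1 h2 => ordLt_of_le_of_lt h1.1 h2⟩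
  haveI : IsIrrefl (Fin n →₀ ℕ) (OrdLt ord) := ⟨fun _ h => h.2 rfl⟩
  haveI : IsStrictOrder (Fin n →₀ ℕ) (OrdLt ord) := ⟨⟩
  rw [RelEmbedding.wellFounded_iff_isEmpty]
  constructor
  rintro ⟨⟨f, hinj⟩, hf⟩
  -- f : ℕ → Fin n →₀ ℕ, decreasing
  have step : ∀ j : ℕ, OrdLt ord (f (j + 1)) (f j) := fun j => hf.mpr (Nat.lt_succ_self j)
  have hdec' : ∀ m d : ℕ, OrdLt ord (f (m + d + 1)) (f m) := by
    intro m d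
    induction d with
    | zero => exact step m
    | succ p ih => exact ordLt_of_le_of_lt (step (m + p + 1)).1 ih
  have hdec : ∀ {m k : ℕ}, m < k → OrdLt ord (f k) (f m) := by
    intro m k h
    obtain ⟨d, rfl⟩ : ∃ d, k = m + d + 1 := ⟨k - m - 1, by omega⟩
    exact hdec' m d
  obtain ⟨m, k, hmk, hle⟩ := (Set.isPWO_of_wellQuasiOrderedLE (Set.univ : Set (Fin n →₀ ℕ))) (fun j => ⟨f j, trivial⟩)
  have h1 : ord.le (f m) (f k) := hadm.2 _ _ (fun i => hle i)
  have h2 := hdec hmk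
  exact h2.2 (ord_le_antisymm h2.1 h1)

end OrdFacts

section Lead
open MvPolynomial

lemma zero_ne_single {n : ℕ} (i : Fin n) : ¬(0 : Fin n →₀ ℕ) = Finsupp.single i 1 :=
  fun hh => one_ne_zero (α := ℕ) (Finsupp.single_eq_zero.mp hh.symm)

variable {K : Type*} [Field K] {n : ℕ} {ord : LinearOrder (Fin n →₀ ℕ)}

lemma leadExp_mem (g : MvPolynomial (Fin n) K) (hg : g ≠ 0) :
    leadExp ord g hg ∈ g.support :=
  @Finset.max'_mem _ ord g.support _

lemma le_leadExp {g : MvPolynomial (Fin n) K} (hg : g ≠ 0) {ν : Fin n →₀ ℕ}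
    (hν : ν ∈ g.support) : ord.le ν (leadExp ord g hg) :=
  @Finset.le_max' _ ord g.support ν hν

lemma leadExp_coeff_ne {g : MvPolynomial (Fin n) K} (hg : g ≠ 0) :
    MvPolynomial.coeff (leadExp ord g hg) g ≠ 0 :=
  (MvPolynomial.mem_support_iff).mp (leadExp_mem g hg)

lemma leadExp_unique {g : MvPolynomial (Fin n) K} (hg : g ≠ 0) {μ : Fin n →₀ ℕ}
    (hmem : μ ∈ g.support) (hmax : ∀ ν ∈ g.support, ord.le ν μ) :
    leadExp ord g hg = μ :=
  ord_le_antisymm (hmax _ (leadExp_mem g hg)) (le_leadExp hg hmem)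

set_option maxHeartbeats 1000000 in
lemma leadExp_mul (hadm : Admissible ord) {p q : MvPolynomial (Fin n) K}
    (hp : p ≠ 0) (hq : q ≠ 0) (hpq : p * q ≠ 0) :
    leadExp ord (p * q) hpq = leadExp ord p hp + leadExp ord q hq := by
  set μ := leadExp ord p hp with hμ
  set ν := leadExp ord q hq with hν
  have hcoeff : MvPolynomial.coeff (μ + ν) (p * q) =
      MvPolynomial.coeff μ p * MvPolynomial.coeff ν q := by
    rw [MvPolynomial.coeff_mul]
    refine Finset.sum_eq_single (μ, ν) ?_ ?_
    · rintro ⟨s, t⟩ hmem hne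
      rw [Finset.HasAntidiagonal.mem_antidiagonal] at hmem
      by_cases hs : s ∈ p.support
      · by_cases ht : t ∈ q.support
        · -- s ≤ μ, t ≤ ν; s + t = μ + ν
          by_cases hsμ : s = μ
          · subst hsμ
            have : t = ν := by
              have := hmem
              exact add_left_cancel this
            exact absurd (by rw [this]) hne
          · have h1 : OrdLt ord s μ := ⟨le_leadExp hp hs, hsμ⟩
            have h2 : OrdLt ord (s + t) (μ + t) := adm_add_lt hadm h1 t
            have h3 : ord.le (μ + t) (μ + ν) := by
              rw [add_comm μ t, add_comm μ ν]
              exact adm_add_le hadm (le_leadExp hq ht) μ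
            have h4 : OrdLt ord (s + t) (s + t) := by
              rw [hmem] at h2 ⊢
              exact ordLt_of_lt_of_le h2 h3
            exact absurd rfl h4.2
        · simp [MvPolynomial.notMem_support_iff.mp ht]
      · simp [MvPolynomial.notMem_support_iff.mp hs]
    · intro hnotmem
      exfalso
      apply hnotmem
      rw [Finset.HasAntidiagonal.mem_antidiagonal]

  have hne : MvPolynomial.coeff (μ + ν) (p * q) ≠ 0 := by
    rw [hcoeff]
    exact mul_ne_zero (leadExp_coeff_ne hp) (leadExp_coeff_ne hq)
  refine leadExp_unique hpq (MvPolynomial.mem_support_iff.mpr hne) ?_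
  intro κ hκ
  have := MvPolynomial.support_mul p q hκ
  rw [Finset.mem_add] at this
  obtain ⟨s, hs, t, ht, rfl⟩ := this
  exact ord_le_trans (adm_add_le hadm (le_leadExp hp hs) t)
    (by rw [add_comm μ t, add_comm μ ν]; exact adm_add_le hadm (le_leadExp hq ht) μ)

lemma leadExp_monomial (γ : Fin n →₀ ℕ) {c : K} (hc : c ≠ 0)
    (h : MvPolynomial.monomial γ c ≠ 0) :
    leadExp ord (MvPolynomial.monomial γ c) h = γ := by
  refine leadExp_unique h ?_ ?_ <;>
    simp [MvPolynomial.support_monomial, hc, ord_le_refl]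

lemma leadExp_linear (hadm : Admissible ord) (i : Fin n) (c : K)
    (h : (MvPolynomial.X i - MvPolynomial.C c : MvPolynomial (Fin n) K) ≠ 0) :
    leadExp ord (MvPolynomial.X i - MvPolynomial.C c) h = Finsupp.single i 1 := by
  classical
  refine leadExp_unique h ?_ ?_
  · rw [MvPolynomial.mem_support_iff]
    simp only [MvPolynomial.coeff_sub, MvPolynomial.coeff_X, MvPolynomial.coeff_C]
    rw [if_neg (zero_ne_single i)]
    simp
  · intro κ hκ
    rw [MvPolynomial.mem_support_iff] at hκ
    simp only [MvPolynomial.coeff_sub, MvPolynomial.coeff_C] at hκ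
    rw [MvPolynomial.coeff_X'] at hκ
    by_cases h1 : Finsupp.single i 1 = κ
    · rw [← h1]; exact ord_le_refl _
    · rw [if_neg h1] at hκ
      have : κ = 0 := by
        by_contra h0
        rw [if_neg (by exact fun hh => h0 hh.symm)] at hκ
        simp at hκ
      subst this
      exact adm_le hadm (by simp)

lemma linear_ne_zero (i : Fin n) (c : K) :
    (MvPolynomial.X i - MvPolynomial.C c : MvPolynomial (Fin n) K) ≠ 0 := by
  intro h
  have := congrArg (MvPolynomial.coeff (Finsupp.single i 1)) h
  simp only [MvPolynomial.coeff_sub, MvPolynomial.coeff_X, MvPolynomial.coeff_C,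
    MvPolynomial.coeff_zero] at this
  rw [if_neg (zero_ne_single i)] at this
  simp at this

lemma leadExp_prod_linear (hadm : Admissible ord) (i : Fin n) (s : Finset K) :
    ∃ hne : (∏ c ∈ s, (MvPolynomial.X i - MvPolynomial.C c) : MvPolynomial (Fin n) K) ≠ 0,
      leadExp ord _ hne = Finsupp.single i s.card := by
  classical
  induction s using Finset.cons_induction with
  | empty =>
    refine ⟨by simp, ?_⟩
    refine leadExp_unique _ ?_ ?_
    · rw [MvPolynomial.mem_support_iff]
      simp [MvPolynomial.coeff_one, Finsupp.single_zero]
    · intro ν hν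
      rw [MvPolynomial.mem_support_iff, Finset.prod_empty, MvPolynomial.coeff_one] at hν
      have hν0 : ν = 0 := by
        by_contra h0
        rw [if_neg (fun hh => h0 hh.symm)] at hν
        simp at hν
      subst hν0
      exact adm_le hadm (by simp)
  | cons c s hcs ih =>
    obtain ⟨hne, hlead⟩ := ih
    rw [Finset.prod_cons]
    refine ⟨mul_ne_zero (linear_ne_zero i c) hne, ?_⟩
    rw [leadExp_mul hadm (linear_ne_zero i c) hne, hlead, leadExp_linear hadm i c,
      Finset.card_cons, ← Finsupp.single_add]
    ring_nf

end Lead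

section Footprint
open MvPolynomial
variable {K : Type*} [Field K] {n : ℕ} {ord : LinearOrder (Fin n →₀ ℕ)}

set_option maxHeartbeats 2000000 in
lemma footprint (hadm : Admissible ord) (W : Finset (Fin n → K)) (D : Finset (Fin n →₀ ℕ))
    (hD : ∀ α : Fin n →₀ ℕ, α ∉ D → ∃ h : MvPolynomial (Fin n) K, ∃ hh : h ≠ 0,
      (∀ w ∈ W, MvPolynomial.eval w h = 0) ∧ leadExp ord h hh = α) :
    W.card ≤ D.card := by
  classical
  let E : MvPolynomial (Fin n) K →ₗ[K] (↥W → K) :=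
    { toFun := fun p w => MvPolynomial.eval (w : Fin n → K) p
      map_add' := fun p q => by funext w; simp
      map_smul' := fun c p => by funext w; simp [MvPolynomial.smul_eval] }
  have hEapp : ∀ (p : MvPolynomial (Fin n) K) (w : ↥W),
      E p w = MvPolynomial.eval (w : Fin n → K) p := fun _ _ => rfl
  set S : Submodule K (↥W → K) :=
    Submodule.span K ((fun α => E (MvPolynomial.monomial α (1 : K))) '' ↑D) with hS
  have hmono : ∀ α ∈ D, E (MvPolynomial.monomial α (1:K)) ∈ S := fun α hα =>
    Submodule.subset_span ⟨α, hα, rfl⟩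
  have main : ∀ μ : Fin n →₀ ℕ, ∀ p : MvPolynomial (Fin n) K,
      (∀ ν ∈ p.support, ord.le ν μ) → E p ∈ S := by
    intro μ
    refine (ord_wf hadm).induction
      (C := fun μ => ∀ p : MvPolynomial (Fin n) K,
        (∀ ν ∈ p.support, ord.le ν μ) → E p ∈ S) μ ?_
    intro x IH p hbd
    by_cases hp0 : p = 0
    · rw [hp0, map_zero]; exact S.zero_mem
    set m := leadExp ord p hp0 with hm
    have hm_le : ord.le m x := hbd m (leadExp_mem p hp0)
    have hstep : ∀ p' : MvPolynomial (Fin n) K,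
        (∀ ν ∈ p'.support, OrdLt ord ν m) → E p' ∈ S := by
      intro p' hb
      by_cases h0 : p' = 0
      · rw [h0, map_zero]; exact S.zero_mem
      · have hlt : OrdLt ord (leadExp ord p' h0) x :=
          ordLt_of_lt_of_le (hb _ (leadExp_mem p' h0)) hm_le
        exact IH _ hlt p' (fun ν hν => le_leadExp h0 hν)
    set c := MvPolynomial.coeff m p with hc
    have hc0 : c ≠ 0 := leadExp_coeff_ne hp0
    by_cases hmD : m ∈ D
    · have hdecomp : p = (p - MvPolynomial.monomial m c) + c • MvPolynomial.monomial m (1:K) := by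
        rw [MvPolynomial.smul_monomial, smul_eq_mul, mul_one]; ring
      have h1 : E (p - MvPolynomial.monomial m c) ∈ S := by
        apply hstep
        intro ν hν
        rw [MvPolynomial.mem_support_iff, MvPolynomial.coeff_sub,
          MvPolynomial.coeff_monomial] at hν
        by_cases hνm : m = ν
        · exfalso; apply hν; rw [if_pos hνm, hc, hνm]; exact sub_self _
        · rw [if_neg hνm, sub_zero] at hν
          exact ⟨le_leadExp hp0 (MvPolynomial.mem_support_iff.mpr hν),
            fun hh => hνm hh.symm⟩
      rw [hdecomp, map_add, map_smul]
      exact S.add_mem h1 (S.smul_mem c (hmono m hmD))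
    · obtain ⟨h, hh0, hvan, hlead⟩ := hD m hmD
      have hch : MvPolynomial.coeff m h ≠ 0 := by
        have := leadExp_coeff_ne (ord := ord) hh0
        rwa [hlead] at this
      set ch := MvPolynomial.coeff m h with hchdef
      set p' := p - (c * ch⁻¹) • h with hp'
      have hEh : E h = 0 := funext fun w => hvan w w.2
      have hE : E p' = E p := by
        rw [hp', map_sub, map_smul, hEh, smul_zero, sub_zero]
      have hmem : E p' ∈ S := by
        apply hstep
        intro ν hν
        rw [MvPolynomial.mem_support_iff] at hν
        have hcoeff : MvPolynomial.coeff ν p' =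
            MvPolynomial.coeff ν p - c * ch⁻¹ * MvPolynomial.coeff ν h := by
          rw [hp', MvPolynomial.coeff_sub, MvPolynomial.coeff_smul, smul_eq_mul]
        by_cases hνm : ν = m
        · exfalso
          apply hν
          rw [hcoeff, hνm, ← hc, ← hchdef, mul_assoc, inv_mul_cancel₀ hch, mul_one, sub_self]
        · refine ⟨?_, hνm⟩
          rw [hcoeff] at hν
          by_cases hp1 : MvPolynomial.coeff ν p = 0
          · have hh1 : MvPolynomial.coeff ν h ≠ 0 := by
              intro hz; apply hν; rw [hp1, hz]; ring
            have := le_leadExp (ord := ord) hh0 (MvPolynomial.mem_support_iff.mpr hh1)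
            rwa [hlead] at this
          · exact le_leadExp hp0 (MvPolynomial.mem_support_iff.mpr hp1)
      rwa [hE] at hmem
  -- interpolation: E is surjective
  have hsep : ∀ w : ↥W, ∃ p : MvPolynomial (Fin n) K,
      MvPolynomial.eval (w : Fin n → K) p ≠ 0 ∧
      ∀ w' : ↥W, w' ≠ w → MvPolynomial.eval (w' : Fin n → K) p = 0 := by
    intro w
    refine ⟨∏ w' ∈ W.erase ↑w, (if h : ∃ i, (w : Fin n → K) i ≠ w' i then
      MvPolynomial.X h.choose - MvPolynomial.C (w' h.choose) else 1), ?_, ?_⟩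
    · rw [map_prod]
      rw [Finset.prod_ne_zero_iff]
      intro w' hw'
      have hne : ∃ i, (w : Fin n → K) i ≠ w' i :=
        Function.ne_iff.mp (fun hh => (Finset.mem_erase.mp hw').1 hh.symm)
      rw [dif_pos hne]
      simpa [sub_ne_zero] using hne.choose_spec
    · intro w' hw'
      rw [map_prod]
      apply Finset.prod_eq_zero (i := (w' : Fin n → K))
        (Finset.mem_erase.mpr ⟨fun hh => hw' (Subtype.ext hh), w'.2⟩)
      have hex : ∃ i, (w : Fin n → K) i ≠ (w' : Fin n → K) i :=
        Function.ne_iff.mp (fun hh => hw' (Subtype.ext hh.symm))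
      rw [dif_pos hex]
      simp
  have hsurj : Function.Surjective E := by
    intro φ
    choose p hp1 hp2 using hsep
    refine ⟨∑ w ∈ W.attach, (φ w * (MvPolynomial.eval (w : Fin n → K) (p w))⁻¹) • p w, ?_⟩
    funext w''
    rw [map_sum]
    rw [Finset.sum_apply]
    rw [Finset.sum_eq_single_of_mem w'' (Finset.mem_attach _ _)]
    · rw [map_smul]
      show (φ w'' * (MvPolynomial.eval (w'' : Fin n → K) (p w''))⁻¹) *
        MvPolynomial.eval (w'' : Fin n → K) (p w'') = φ w''
      rw [mul_assoc, inv_mul_cancel₀ (hp1 w''), mul_one]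
    · intro w hw hne
      rw [map_smul]
      show (φ w * (MvPolynomial.eval (w : Fin n → K) (p w))⁻¹) *
        MvPolynomial.eval (w'' : Fin n → K) (p w) = 0
      rw [hp2 w w'' (Ne.symm hne), mul_zero]
  have hspan : S = ⊤ := by
    rw [Submodule.eq_top_iff']
    intro φ
    obtain ⟨q, rfl⟩ := hsurj φ
    by_cases hq0 : q = 0
    · rw [hq0, map_zero]; exact S.zero_mem
    · exact main (leadExp ord q hq0) q (fun ν hν => le_leadExp hq0 hν)
  have h1 : Module.finrank K (↥W → K) = W.card := by
    rw [Module.finrank_fintype_fun_eq_card, Fintype.card_coe]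
  let L : (↥D → K) →ₗ[K] (↥W → K) :=
    { toFun := fun cv => ∑ α ∈ D.attach, cv α • E (MvPolynomial.monomial (↑α) (1:K))
      map_add' := fun u v => by
        simp [add_smul, Finset.sum_add_distrib]
      map_smul' := fun a v => by
        simp [smul_smul, Finset.smul_sum] }
  have hLsurj : Function.Surjective L := by
    have hrange : S ≤ LinearMap.range L := by
      rw [hS, Submodule.span_le]
      rintro v ⟨α, hα, rfl⟩
      refine ⟨Pi.single ⟨α, hα⟩ 1, ?_⟩
      simp only [L, LinearMap.coe_mk, AddHom.coe_mk]
      rw [Finset.sum_eq_single_of_mem (⟨α, hα⟩ : ↥D) (Finset.mem_attach _ _)]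
      · simp
      · intro b _ hb
        rw [Pi.single_eq_of_ne hb, zero_smul]
    intro φ
    have : φ ∈ LinearMap.range L := hrange (hspan ▸ Submodule.mem_top)
    exact this
  have h2 : Module.finrank K (↥W → K) ≤ Module.finrank K (↥D → K) := by
    have hr : LinearMap.range L = ⊤ := LinearMap.range_eq_top.mpr hLsurj
    calc Module.finrank K (↥W → K)
        = Module.finrank K (⊤ : Submodule K (↥W → K)) := (finrank_top K _).symm
      _ = Module.finrank K (LinearMap.range L) := by rw [hr]
      _ ≤ Module.finrank K (↥D → K) := LinearMap.finrank_range_le L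
  have h3 : Module.finrank K (↥D → K) = D.card := by
    rw [Module.finrank_fintype_fun_eq_card, Fintype.card_coe]
  omega

end Footprint

lemma count_aux {n : ℕ} (a e b : Fin n → ℕ) (he : ∀ i, e i < a i) :
    ((Fintype.piFinset fun i => Finset.range (a i)).filter
      (fun v => ¬((∀ i, e i ≤ v i) ∧ ∃ i, e i + b i ≤ v i))).card
    = ∏ i, a i - ((∏ i, (a i - e i)) - ∏ i, min (b i) (a i - e i)) := by
  classical
  set T := Fintype.piFinset fun i => Finset.range (a i) with hT
  set p : (Fin n → ℕ) → Prop := fun v => (∀ i, e i ≤ v i) ∧ ∃ i, e i + b i ≤ v i with hp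
  have hsplit1 : (T.filter p).card + (T.filter (fun v => ¬ p v)).card = T.card :=
    Finset.card_filter_add_card_filter_not _
  set A := T.filter (fun v => ∀ i, e i ≤ v i) with hA
  have hTp : T.filter p = A.filter (fun v => ∃ i, e i + b i ≤ v i) := by
    rw [hA, Finset.filter_filter]
  have hsplit2 : (A.filter (fun v => ∃ i, e i + b i ≤ v i)).card +
      (A.filter (fun v => ¬ ∃ i, e i + b i ≤ v i)).card = A.card :=
    Finset.card_filter_add_card_filter_not _
  have hAcard : A.card = ∏ i, (a i - e i) := by
    have : A = Fintype.piFinset fun i => Finset.Ico (e i) (a i) := by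
      ext v
      simp only [hA, hT, Finset.mem_filter, Fintype.mem_piFinset, Finset.mem_range,
        Finset.mem_Ico]
      constructor
      · rintro ⟨h1, h2⟩ i; exact ⟨h2 i, h1 i⟩
      · intro h; exact ⟨fun i => (h i).2, fun i => (h i).1⟩
    rw [this, Fintype.card_piFinset]
    simp [Nat.card_Ico]
  have hAmincard : (A.filter (fun v => ¬ ∃ i, e i + b i ≤ v i)).card =
      ∏ i, min (b i) (a i - e i) := by
    have h1 : A.filter (fun v => ¬ ∃ i, e i + b i ≤ v i) =
        Fintype.piFinset fun i => Finset.Ico (e i) (min (a i) (e i + b i)) := by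
      ext v
      simp only [hA, hT, Finset.mem_filter, Fintype.mem_piFinset, Finset.mem_range,
        Finset.mem_Ico, not_exists, not_le, lt_min_iff]
      constructor
      · rintro ⟨⟨h1, h2⟩, h3⟩ i; exact ⟨h2 i, h1 i, h3 i⟩
      · intro h; exact ⟨⟨fun i => (h i).2.1, fun i => (h i).1⟩, fun i => (h i).2.2⟩
    rw [h1, Fintype.card_piFinset]
    apply Finset.prod_congr rfl
    intro i _
    rw [Nat.card_Ico]
    have h2 := he i
    clear h1 hAcard hsplit2 hTp hsplit1 hA hp hT
    clear A p T
    omega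
  have hTcard : T.card = ∏ i, a i := by
    rw [hT, Fintype.card_piFinset]; simp
  have hm1 : ∏ i, min (b i) (a i - e i) ≤ ∏ i, (a i - e i) :=
    Finset.prod_le_prod' fun i _ => min_le_right _ _
  have hm2 : ∏ i, (a i - e i) ≤ ∏ i, a i :=
    Finset.prod_le_prod' fun i _ => Nat.sub_le _ _
  have hpos : (T.filter p).card = (∏ i, (a i - e i)) - ∏ i, min (b i) (a i - e i) := by
    rw [hTp, Nat.eq_sub_of_add_eq hsplit2, hAcard, hAmincard]
  have hneg : (T.filter (fun v => ¬ p v)).card = T.card - (T.filter p).card :=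
    Nat.eq_sub_of_add_eq' hsplit1
  rw [hneg, hpos, hTcard]

lemma arith_final (A M T wc dc gxc sc : ℕ) (h1 : M ≤ A) (h2 : A ≤ T) (h3 : wc ≤ dc)
    (h4 : dc = T - (A - M)) (h5 : gxc - wc ≤ sc) (h6 : gxc = T) : A - M ≤ sc := by omega


/-- Alon–Füredi–Clark theorem for punctured grids. -/
theorem stmt_18 {K : Type*} [Field K] {n : ℕ} (X Y : Fin n → Finset K)
    (hYX : ∀ i, Y i ⊆ X i)
    (ord : LinearOrder (Fin n →₀ ℕ)) (hadm : Admissible ord)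
    (f g : MvPolynomial (Fin n) K)
    (hgmem : g ∈ vanishingIdealOn
        {z | (∀ i, z i ∈ X i) ∧ ¬ (∀ i, z i ∈ Y i)} + Ideal.span {f})
    (hg : g ≠ 0)
    (he : ∀ i, leadExp ord g hg i < (X i).card) :
    ∏ i, ((X i).card - leadExp ord g hg i) -
        ∏ i, min ((Y i).card) ((X i).card - leadExp ord g hg i) ≤
      {z : Fin n → K | ((∀ i, z i ∈ X i) ∧ ¬ (∀ i, z i ∈ Y i)) ∧
        MvPolynomial.eval z f ≠ 0}.ncard := by
  classical
  set e := leadExp ord g hg with hedef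
  rw [Submodule.add_eq_sup] at hgmem
  obtain ⟨h, hh, rf, hrf, hsum⟩ := Submodule.mem_sup.mp hgmem
  obtain ⟨r, hr⟩ := Ideal.mem_span_singleton'.mp hrf
  have hhv : ∀ z : Fin n → K, (∀ i, z i ∈ X i) → ¬(∀ i, z i ∈ Y i) →
      MvPolynomial.eval z h = 0 := fun z h1 h2 => hh z ⟨h1, h2⟩
  have hkey : ∀ z : Fin n → K, (∀ i, z i ∈ X i) → ¬(∀ i, z i ∈ Y i) →
      MvPolynomial.eval z f = 0 → MvPolynomial.eval z g = 0 := by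
    intro z h1 h2 h3
    rw [← hsum, map_add, hhv z h1 h2, ← hr, map_mul, h3, mul_zero, add_zero]
  set GX := Fintype.piFinset X with hGX
  set GY := Fintype.piFinset Y with hGY
  set Z := GX.filter (fun z => MvPolynomial.eval z g = 0) with hZ
  set W := Z ∪ GY with hW
  have hWX : W ⊆ GX := by
    intro z hz
    rcases Finset.mem_union.mp hz with h1 | h1
    · exact (Finset.mem_filter.mp h1).1
    · exact Fintype.mem_piFinset.mpr fun i => hYX i (Fintype.mem_piFinset.mp h1 i)
  set Dfun := (Fintype.piFinset fun i => Finset.range ((X i).card)).filter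
      (fun v => ¬((∀ i, e i ≤ v i) ∧ ∃ i, e i + (Y i).card ≤ v i)) with hDfun
  set D := Dfun.map (Finsupp.equivFunOnFinite.symm.toEmbedding) with hD
  have hmemD : ∀ α : Fin n →₀ ℕ, α ∈ D ↔
      ((∀ i, α i < (X i).card) ∧
        ¬((∀ i, e i ≤ α i) ∧ ∃ i, e i + (Y i).card ≤ α i)) := by
    intro α
    rw [hD, Finset.mem_map_equiv, hDfun, Finset.mem_filter, Fintype.mem_piFinset]
    simp only [Equiv.symm_symm, Finsupp.equivFunOnFinite_apply, Finset.mem_range]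
  have hDhyp : ∀ α : Fin n →₀ ℕ, α ∉ D → ∃ hpoly : MvPolynomial (Fin n) K,
      ∃ hne : hpoly ≠ 0,
      (∀ w ∈ W, MvPolynomial.eval w hpoly = 0) ∧ leadExp ord hpoly hne = α := by
    intro α hα
    rw [hmemD α] at hα
    by_cases hbox : ∀ i, α i < (X i).card
    · have hQ : (∀ i, e i ≤ α i) ∧ ∃ i, e i + (Y i).card ≤ α i := by
        by_contra hq; exact hα ⟨hbox, hq⟩
      obtain ⟨hle, i, hi⟩ := hQ
      obtain ⟨hQne, hQlead⟩ := leadExp_prod_linear (ord := ord) hadm i (Y i)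
      have hgQ : g * (∏ c ∈ Y i, (MvPolynomial.X i - MvPolynomial.C c)) ≠ 0 :=
        mul_ne_zero hg hQne
      have hmono : (MvPolynomial.monomial (α - (e + Finsupp.single i ((Y i).card)))
          (1 : K)) ≠ 0 := by
        simp [MvPolynomial.monomial_eq_zero]
      refine ⟨_, mul_ne_zero hmono hgQ, ?_, ?_⟩
      · intro w hw
        rw [map_mul, map_mul]
        rcases Finset.mem_union.mp hw with h1 | h1
        · rw [(Finset.mem_filter.mp h1).2]; ring
        · have hz : MvPolynomial.eval w
              (∏ c ∈ Y i, (MvPolynomial.X i - MvPolynomial.C c)) = 0 := by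
            rw [map_prod]
            exact Finset.prod_eq_zero (Fintype.mem_piFinset.mp h1 i) (by simp)
          rw [hz]; ring
      · rw [leadExp_mul hadm hmono hgQ, leadExp_monomial _ one_ne_zero,
          leadExp_mul hadm hg hQne, hQlead, ← hedef]
        ext j
        rw [Finsupp.add_apply, Finsupp.tsub_apply, Finsupp.add_apply,
          Finsupp.single_apply]
        by_cases hj : i = j
        · subst hj
          rw [if_pos rfl]
          have h1 := hi
          omega
        · rw [if_neg hj]
          have h1 := hle j
          omega
    · push_neg at hbox
      obtain ⟨i, hi⟩ := hbox
      obtain ⟨hPne, hPlead⟩ := leadExp_prod_linear (ord := ord) hadm i (X i)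
      have hmono : (MvPolynomial.monomial (α - Finsupp.single i ((X i).card))
          (1 : K)) ≠ 0 := by
        simp [MvPolynomial.monomial_eq_zero]
      refine ⟨_, mul_ne_zero hmono hPne, ?_, ?_⟩
      · intro w hw
        rw [map_mul]
        have hz : MvPolynomial.eval w
            (∏ c ∈ X i, (MvPolynomial.X i - MvPolynomial.C c)) = 0 := by
          rw [map_prod]
          exact Finset.prod_eq_zero (Fintype.mem_piFinset.mp (hWX hw) i) (by simp)
        rw [hz]; ring
      · rw [leadExp_mul hadm hmono hPne, leadExp_monomial _ one_ne_zero, hPlead]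
        ext j
        rw [Finsupp.add_apply, Finsupp.tsub_apply, Finsupp.single_apply]
        by_cases hj : i = j
        · subst hj
          rw [if_pos rfl]
          omega
        · rw [if_neg hj]
          omega
  have hWD := footprint hadm W D hDhyp
  have hDcard : D.card = (∏ i, (X i).card) -
      ((∏ i, ((X i).card - e i)) - ∏ i, min ((Y i).card) ((X i).card - e i)) := by
    rw [hD, Finset.card_map, hDfun]
    exact count_aux (fun i => (X i).card) (fun i => e i) (fun i => (Y i).card) he
  have hsub : ∀ z ∈ GX \ W, z ∈ {z : Fin n → K | ((∀ i, z i ∈ X i) ∧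
      ¬ (∀ i, z i ∈ Y i)) ∧ MvPolynomial.eval z f ≠ 0} := by
    intro z hz
    obtain ⟨hzX, hzW⟩ := Finset.mem_sdiff.mp hz
    have h1 : ∀ i, z i ∈ X i := Fintype.mem_piFinset.mp hzX
    have h2 : ¬(∀ i, z i ∈ Y i) := fun hy =>
      hzW (Finset.mem_union_right _ (Fintype.mem_piFinset.mpr hy))
    have h3 : MvPolynomial.eval z g ≠ 0 := fun h0 =>
      hzW (Finset.mem_union_left _ (Finset.mem_filter.mpr ⟨hzX, h0⟩))
    exact ⟨⟨h1, h2⟩, fun hf0 => h3 (hkey z h1 h2 hf0)⟩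
  have hfin : ({z : Fin n → K | ((∀ i, z i ∈ X i) ∧ ¬ (∀ i, z i ∈ Y i)) ∧
      MvPolynomial.eval z f ≠ 0}).Finite :=
    Set.Finite.subset GX.finite_toSet (fun z hz => Fintype.mem_piFinset.mpr hz.1.1)
  have h5 : (GX \ W).card ≤ ({z : Fin n → K | ((∀ i, z i ∈ X i) ∧
      ¬ (∀ i, z i ∈ Y i)) ∧ MvPolynomial.eval z f ≠ 0}).ncard := by
    rw [← Set.ncard_coe_finset]
    exact Set.ncard_le_ncard (fun z hz => hsub z (Finset.mem_coe.mp hz)) hfin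
  have h6 : (GX \ W).card = GX.card - W.card := Finset.card_sdiff_of_subset hWX
  have h7 : GX.card = ∏ i, (X i).card := by
    rw [hGX, Fintype.card_piFinset]
  have hm1 : ∏ i, min ((Y i).card) ((X i).card - e i) ≤ ∏ i, ((X i).card - e i) :=
    Finset.prod_le_prod' fun i _ => min_le_right _ _
  have hm2 : ∏ i, ((X i).card - e i) ≤ ∏ i, (X i).card :=
    Finset.prod_le_prod' fun i _ => Nat.sub_le _ _
  exact arith_final _ _ _ W.card D.card GX.card _ hm1 hm2 hWD hDcard (h6 ▸ h5) h7
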